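/- arXiv:2006.13470 — 2 statements merged into one kernel-verified Lean document; each statement's English description precedes it below -/
import Mathlib

section
/- Let λ₋ and λ₊ be two bounded measured geodesic laminations on ℍ² that strongly fill. Then there exist ε > 0 and L > 0 with the following property: if (p,q) is in the support of λ₊ and z₁, z₂ ∈ g(p,q) satisfy dist(z₁,z₂) ≥ L, and (p′,q′) is in the support of λ₋ and w₁, w₂ ∈ g(p′,q′) satisfy dist(w₁,w₂) ≥ L, then at least one of z₁, z₂ is at hyperbolic distance at least ε from the geodesic segment γ₋ := {w ∈ g(p′,q′) : dist(w₁,w) + dist(w,w₂) = dist(w₁,w₂)}; that is, max(infDist(z₁, γ₋), infDist(z₂, γ₋)) ≥ ε. -/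
/- Upper half-plane model of ℍ², ideal boundary ∂∞ℍ² = OnePoint ℝ,
   geodesics, measured geodesic laminations. -/

noncomputable section
open MeasureTheory Set
open scoped ENNReal

/-- The geodesic of ℍ² with ideal endpoints `p q ∈ ℝ ∪ {∞}`: the Euclidean
semicircle over the real axis with endpoints `p, q` (the vertical half-line
over `p` if `q = ∞`, and vice versa). -/
def geodesic (p q : OnePoint ℝ) : Set UpperHalfPlane :=
  {z | (∃ x y : ℝ, p = (x : OnePoint ℝ) ∧ q = (y : OnePoint ℝ) ∧
          ‖(z : ℂ) - (((x + y) / 2 : ℝ) : ℂ)‖ = |y - x| / 2) ∨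
       (∃ x : ℝ, ((p = (x : OnePoint ℝ) ∧ q = OnePoint.infty) ∨
                  (p = OnePoint.infty ∧ q = (x : OnePoint ℝ))) ∧
          (z : ℂ).re = x)}

/-- `g(p,q)` separates `z` and `w`: both lie off the geodesic, in two
different connected components of its complement. -/
def Separates (p q : OnePoint ℝ) (z w : UpperHalfPlane) : Prop :=
  z ∉ geodesic p q ∧ w ∉ geodesic p q ∧
    connectedComponentIn (geodesic p q)ᶜ z ≠ connectedComponentIn (geodesic p q)ᶜ w

/-- Two pairs of ideal endpoints are unlinked: the corresponding geodesics do not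
cross, i.e. they are equal or disjoint. -/
def Unlinked (p q p' q' : OnePoint ℝ) : Prop :=
  geodesic p q = geodesic p' q' ∨ geodesic p q ∩ geodesic p' q' = ∅

instance : MeasurableSpace (OnePoint ℝ) := borel _

/-- Topological support of a measure. -/
def mSupport (μ : Measure (OnePoint ℝ × OnePoint ℝ)) : Set (OnePoint ℝ × OnePoint ℝ) :=
  {x | ∀ U : Set (OnePoint ℝ × OnePoint ℝ), IsOpen U → x ∈ U → 0 < μ U}

/-- A measured geodesic lamination on ℍ², encoded as a Borel measure on pairs of
distinct ideal endpoints: it gives no mass to the diagonal, is locally finite off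
the diagonal, is invariant under swapping endpoints, and any two pairs in its
support are unlinked. -/
structure MeasuredLamination where
  μ : Measure (OnePoint ℝ × OnePoint ℝ)
  diag_null : μ {x | x.1 = x.2} = 0
  locFin : ∀ x : OnePoint ℝ × OnePoint ℝ, x.1 ≠ x.2 →
    ∃ U : Set (OnePoint ℝ × OnePoint ℝ), IsOpen U ∧ x ∈ U ∧ μ U < ⊤
  symm : μ.map Prod.swap = μ
  unlinked : ∀ x ∈ mSupport μ, ∀ y ∈ mSupport μ, x.1 ≠ x.2 → y.1 ≠ y.2 →
    Unlinked x.1 x.2 y.1 y.2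

/-- Intersection number `i([z,w], λ)` of a lamination with the geodesic segment
`[z,w]`: the mass of the set of leaves separating `z` from `w`. -/
def interNum (L : MeasuredLamination) (z w : UpperHalfPlane) : ℝ≥0∞ :=
  L.μ {pq : OnePoint ℝ × OnePoint ℝ | Separates pq.1 pq.2 z w}

/-- A measured geodesic lamination is bounded if geodesic segments of length at
most 1 have uniformly bounded intersection with it. -/
def MeasuredLamination.Bounded (L : MeasuredLamination) : Prop :=
  ∃ C : ℝ, 0 < C ∧ ∀ z w : UpperHalfPlane, dist z w ≤ 1 →
    interNum L z w ≤ ENNReal.ofReal C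

/-- Two measured geodesic laminations strongly fill if long geodesic segments
have large total intersection with them. -/
def StronglyFill (L M : MeasuredLamination) : Prop :=
  ∀ ε : ℝ, 0 < ε → ∃ c : ℝ, 0 < c ∧ ∀ z w : UpperHalfPlane, c ≤ dist z w →
    ENNReal.ofReal ε ≤ interNum L z w + interNum M z w

/-- The Cayley transform `∂∞ℍ² → S¹ ⊆ ℂ`, `x ↦ (x−i)/(x+i)`, `∞ ↦ 1`. -/
def cayley (x : OnePoint ℝ) : ℂ :=
  OnePoint.rec 1 (fun a : ℝ => ((a : ℂ) - Complex.I) / ((a : ℂ) + Complex.I)) x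

/-- The visual metric on `∂∞ℍ²` viewed from `i`. -/
def dVis (x y : OnePoint ℝ) : ℝ := ‖cayley x - cayley y‖

/-!
Take `ε = 1`, and let `L` be the length beyond which strong filling forces total intersection at
least `4C + 1`, where `C` bounds `λ₋` on unit segments. Leaves in the support of a lamination are
pairwise unlinked, so almost no leaf separates two points of a given leaf; hence `[z₁, z₂]` meets
`λ₊` in measure zero. If `z₁, z₂` were within `1` of points `u₁, u₂` of a `λ₋`-leaf, then
`i([z₁,z₂], λ₋)` is at most `i([z₁,u₁]) + i([u₁,u₂]) + i([u₂,z₂])` plus the mass of the leaves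
through `u₁` and `u₂`. The middle term vanishes, the outer ones are `≤ C`, and the leaves through
`uᵢ` almost all coincide with the leaf itself, so they all cross a unit segment transverse to it and
have mass `≤ C`. This gives `i([z₁,z₂], λ₋) + i([z₁,z₂], λ₊) ≤ 4C`, a contradiction.
-/

open scoped UpperHalfPlane

lemma geodesic_coe_coe (x y : ℝ) :
    geodesic x y = {z : ℍ | ‖(z : ℂ) - (((x + y) / 2 : ℝ) : ℂ)‖ = |y - x| / 2} := by
  ext z
  simp [geodesic, eq_comm]

lemma geodesic_coe_infty (x : ℝ) : geodesic x OnePoint.infty = {z : ℍ | z.re = x} := by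
  ext z
  simp [geodesic, eq_comm]

lemma geodesic_infty_coe (x : ℝ) : geodesic OnePoint.infty x = {z : ℍ | z.re = x} := by
  ext z
  simp [geodesic, eq_comm]

lemma geodesic_self (p : OnePoint ℝ) : geodesic p p = ∅ := by
  induction p using OnePoint.rec with
  | infty => ext z; simp [geodesic]
  | coe x =>
    ext z
    simp only [geodesic_coe_coe, sub_self, abs_zero, zero_div, norm_eq_zero, sub_eq_zero,
      mem_ofPred_eq, mem_empty_iff_false, iff_false]
    intro h
    simpa [← UpperHalfPlane.coe_im, h] using z.im_pos

lemma ne_of_mem_geodesic {p q : OnePoint ℝ} {z : ℍ} (h : z ∈ geodesic p q) : p ≠ q := by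
  rintro rfl
  simp [geodesic_self] at h

lemma geodesic_eq_empty_or_line_or_circle (p q : OnePoint ℝ) :
    geodesic p q = ∅ ∨ (∃ x : ℝ, geodesic p q = {z : ℍ | z.re = x}) ∨
      ∃ m r : ℝ, 0 < r ∧ geodesic p q = {z : ℍ | ‖(z : ℂ) - m‖ = r} := by
  induction p using OnePoint.rec with
  | infty =>
    induction q using OnePoint.rec with
    | infty => exact Or.inl (geodesic_self _)
    | coe y => exact Or.inr (Or.inl ⟨y, geodesic_infty_coe y⟩)
  | coe x =>
    induction q using OnePoint.rec with
    | infty => exact Or.inr (Or.inl ⟨x, geodesic_coe_infty x⟩)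
    | coe y =>
      rcases eq_or_ne x y with rfl | hxy
      · exact Or.inl (geodesic_self _)
      · exact Or.inr (Or.inr ⟨(x + y) / 2, |y - x| / 2,
          half_pos (abs_pos.2 (sub_ne_zero.2 hxy.symm)), geodesic_coe_coe x y⟩)

lemma isPreconnected_setOf_re_eq (x : ℝ) : IsPreconnected {z : ℍ | z.re = x} := by
  have : {z : ℍ | z.re = x} =
      range fun y => UpperHalfPlane.mk ⟨x, Real.exp y⟩ (Real.exp_pos y) := by
    ext z
    refine ⟨fun (hz : z.re = x) => ⟨Real.log z.im, UpperHalfPlane.ext (Complex.ext ?_ ?_)⟩, ?_⟩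
    · simp [hz]
    · simp [Real.exp_log z.im_pos]
    · rintro ⟨y, rfl⟩
      rfl
  rw [this]
  exact isPreconnected_range (UpperHalfPlane.isometry_vertical_line x).continuous

lemma isPreconnected_setOf_norm_sub_eq (m r : ℝ) :
    IsPreconnected {z : ℍ | ‖(z : ℂ) - m‖ = r} := by
  rw [← UpperHalfPlane.isEmbedding_coe.isPreconnected_image]
  suffices ((↑) : ℍ → ℂ) '' {z | ‖(z : ℂ) - m‖ = r} =
      (fun t : ℝ => (t : ℂ) + √(r ^ 2 - (t - m) ^ 2) * Complex.I) '' Ioo (m - r) (m + r) by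
    rw [this]
    exact isPreconnected_Ioo.image _ (by fun_prop)
  ext w
  constructor
  · rintro ⟨z, hz, rfl⟩
    have him : 0 < z.im := z.im_pos
    have hsq : (z.re - m) ^ 2 + z.im ^ 2 = r ^ 2 := by
      rw [← hz, Complex.sq_norm, Complex.normSq_apply]
      simp only [Complex.sub_re, Complex.sub_im, Complex.ofReal_re, Complex.ofReal_im,
        UpperHalfPlane.coe_re, UpperHalfPlane.coe_im, sub_zero]
      ring
    have hr : 0 ≤ r := hz ▸ norm_nonneg _
    refine ⟨z.re, ⟨by nlinarith, by nlinarith⟩, ?_⟩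
    show (z.re : ℂ) + √(r ^ 2 - (z.re - m) ^ 2) * Complex.I = z
    rw [show r ^ 2 - (z.re - m) ^ 2 = z.im ^ 2 by linarith, Real.sqrt_sq him.le]
    exact z.re_add_im
  · rintro ⟨t, ⟨ht₁, ht₂⟩, rfl⟩
    have hpos : 0 < r ^ 2 - (t - m) ^ 2 := by nlinarith
    refine ⟨⟨_, by simpa using Real.sqrt_pos.2 hpos⟩, ?_, rfl⟩
    have hsub : (t : ℂ) + √(r ^ 2 - (t - m) ^ 2) * Complex.I - m =
        ((t - m : ℝ) : ℂ) + √(r ^ 2 - (t - m) ^ 2) * Complex.I := by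
      push_cast; ring
    show ‖(t : ℂ) + √(r ^ 2 - (t - m) ^ 2) * Complex.I - m‖ = r
    rw [hsub, Complex.norm_add_mul_I, Real.sq_sqrt hpos.le, add_sub_cancel,
      Real.sqrt_sq (by linarith)]

lemma isPreconnected_geodesic (p q : OnePoint ℝ) : IsPreconnected (geodesic p q) := by
  rcases geodesic_eq_empty_or_line_or_circle p q with h | ⟨x, h⟩ | ⟨m, r, -, h⟩ <;> rw [h]
  exacts [isPreconnected_empty, isPreconnected_setOf_re_eq x,
    isPreconnected_setOf_norm_sub_eq m r]

lemma separates_congr {a b p q : OnePoint ℝ} (h : geodesic a b = geodesic p q) {z w : ℍ} :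
    Separates a b z w ↔ Separates p q z w := by
  simp only [Separates, h]

lemma separates_of_lt_of_lt {p q : OnePoint ℝ} {f : ℍ → ℝ} (hf : Continuous f) {v : ℝ}
    (hg : geodesic p q = {z | f z = v}) {z w : ℍ} (hz : f z < v) (hw : v < f w) :
    Separates p q z w := by
  rw [Separates, hg]
  refine ⟨hz.ne, hw.ne', fun hzw => ?_⟩
  have hwz : w ∈ connectedComponentIn {z | f z = v}ᶜ z :=
    hzw ▸ mem_connectedComponentIn (x := w) hw.ne'
  obtain ⟨u, hu, hfu⟩ := isPreconnected_connectedComponentIn.intermediate_value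
    (mem_connectedComponentIn (x := z) hz.ne) hwz hf.continuousOn ⟨hz.le, hw.le⟩
  exact connectedComponentIn_subset _ _ hu hfu

lemma not_separates_of_isPreconnected {a b : OnePoint ℝ} {S : Set ℍ} (hS : IsPreconnected S)
    (hdisj : Disjoint S (geodesic a b)) {z w : ℍ} (hz : z ∈ S) (hw : w ∈ S) :
    ¬ Separates a b z w :=
  fun h => h.2.2 (connectedComponentIn_eq
    (hS.subset_connectedComponentIn hz hdisj.subset_compl_right hw))

lemma exists_separates_of_dist_le_one {p q : OnePoint ℝ} (hne : (geodesic p q).Nonempty) :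
    ∃ z w : ℍ, Separates p q z w ∧ dist z w ≤ 1 := by
  rcases geodesic_eq_empty_or_line_or_circle p q with h | ⟨x, h⟩ | ⟨m, r, hr, h⟩
  · exact absurd h hne.ne_empty
  · let z : ℍ := UpperHalfPlane.mk ⟨x - 4⁻¹, 1⟩ one_pos
    let w : ℍ := UpperHalfPlane.mk ⟨x + 4⁻¹, 1⟩ one_pos
    refine ⟨z, w, separates_of_lt_of_lt UpperHalfPlane.continuous_re h
      (show x - 4⁻¹ < x by linarith) (show x < x + 4⁻¹ by linarith), ?_⟩
    have hzw : (z : ℂ) - w = ((-2⁻¹ : ℝ) : ℂ) :=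
      Complex.ext (by simp [z, w]; ring) (by simp [z, w])
    calc dist z w ≤ dist (z : ℂ) w / √(z.im * w.im) :=
          UpperHalfPlane.dist_le_dist_coe_div_sqrt z w
      _ ≤ 1 := by simp [z, w, Complex.dist_eq, hzw]; norm_num
  · let γ := fun y : ℝ => UpperHalfPlane.mk ⟨m, Real.exp y⟩ (Real.exp_pos y)
    have hγ (y : ℝ) : ‖((γ y : ℍ) : ℂ) - m‖ = Real.exp y := by
      have : ((γ y : ℍ) : ℂ) - m = (Real.exp y : ℂ) * Complex.I :=
        Complex.ext (by simp [γ]) (by simp [γ, Complex.exp_ofReal_re])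
      rw [this, norm_mul, Complex.norm_I, mul_one, Complex.norm_real,
        Real.norm_of_nonneg (Real.exp_pos y).le]
    refine ⟨γ (Real.log r - 2⁻¹), γ (Real.log r + 2⁻¹), separates_of_lt_of_lt
      (by fun_prop) h ?_ ?_, ?_⟩
    · rw [hγ, Real.exp_sub, Real.exp_log hr]
      exact div_lt_self hr (Real.one_lt_exp_iff.2 (by norm_num))
    · rw [hγ, Real.exp_add, Real.exp_log hr]
      exact lt_mul_of_one_lt_right hr (Real.one_lt_exp_iff.2 (by norm_num))
    · rw [(UpperHalfPlane.isometry_vertical_line m).dist_eq, Real.dist_eq]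
      ring_nf
      norm_num

lemma setOf_separates_subset (z u w : ℍ) :
    {pq : OnePoint ℝ × OnePoint ℝ | Separates pq.1 pq.2 z w} ⊆
      {pq | Separates pq.1 pq.2 z u} ∪ {pq | Separates pq.1 pq.2 u w} ∪
        {pq | u ∈ geodesic pq.1 pq.2} := by
  rintro ⟨p, q⟩ ⟨hz, hw, hzw⟩
  by_cases hu : u ∈ geodesic p q
  · exact Or.inr hu
  by_cases hzu :
      connectedComponentIn (geodesic p q)ᶜ z = connectedComponentIn (geodesic p q)ᶜ u
  · exact Or.inl (Or.inr ⟨hu, hw, hzu ▸ hzw⟩)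
  · exact Or.inl (Or.inl ⟨hz, hu, hzu⟩)

instance : SecondCountableTopology (OnePoint ℝ) :=
  (onePointEquivSphereOfFinrankEq (ι := Fin 2) (V := ℝ) (by simp)).isEmbedding
    |>.secondCountableTopology

lemma mSupport_eq_support (μ : Measure (OnePoint ℝ × OnePoint ℝ)) : mSupport μ = μ.support := by
  rw [Measure.support_eq_forall_isOpen]
  ext x
  exact ⟨fun h U hxU hU => h U hU hxU, fun h U hU hxU => h U hxU hU⟩

lemma mSupport_mem_ae (μ : Measure (OnePoint ℝ × OnePoint ℝ)) : mSupport μ ∈ ae μ :=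
  mSupport_eq_support μ ▸ Measure.support_mem_ae

namespace MeasuredLamination

variable (L : MeasuredLamination)

lemma ae_unlinked {p q : OnePoint ℝ} (hpq : (p, q) ∈ mSupport L.μ) (hne : p ≠ q) :
    ∀ᵐ ab ∂L.μ, Unlinked ab.1 ab.2 p q := by
  filter_upwards [mSupport_mem_ae L.μ, measure_eq_zero_iff_ae_notMem.1 L.diag_null]
    with ab hab hdiag using L.unlinked ab hab (p, q) hpq hdiag hne

lemma interNum_eq_zero_of_mem_leaf {p q : OnePoint ℝ} (hpq : (p, q) ∈ mSupport L.μ) {z w : ℍ}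
    (hz : z ∈ geodesic p q) (hw : w ∈ geodesic p q) : interNum L z w = 0 := by
  refine measure_eq_zero_iff_ae_notMem.2 ?_
  filter_upwards [L.ae_unlinked hpq (ne_of_mem_geodesic hz)] with ab hab hsep
  rcases hab with heq | hdisj
  · exact hsep.1 (heq ▸ hz)
  · exact not_separates_of_isPreconnected (isPreconnected_geodesic p q)
      (disjoint_iff_inter_eq_empty.2 hdisj).symm hz hw hsep

lemma measure_leaves_through_le {C : ℝ}
    (hC : ∀ z w : ℍ, dist z w ≤ 1 → interNum L z w ≤ ENNReal.ofReal C)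
    {p q : OnePoint ℝ} (hpq : (p, q) ∈ mSupport L.μ) {u : ℍ} (hu : u ∈ geodesic p q) :
    L.μ {ab | u ∈ geodesic ab.1 ab.2} ≤ ENNReal.ofReal C := by
  obtain ⟨z, w, hsep, hzw⟩ := exists_separates_of_dist_le_one ⟨u, hu⟩
  refine le_trans (measure_mono_ae ?_) (hC z w hzw)
  filter_upwards [L.ae_unlinked hpq (ne_of_mem_geodesic hu)] with ab hab hu'
  rcases hab with heq | hdisj
  · exact (separates_congr heq).2 hsep
  · exact absurd (hdisj.subset ⟨hu', hu⟩) (notMem_empty u)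

lemma interNum_le_add (z u w : ℍ) :
    interNum L z w ≤ interNum L z u + interNum L u w + L.μ {ab | u ∈ geodesic ab.1 ab.2} :=
  (measure_mono (setOf_separates_subset z u w)).trans <|
    (measure_union_le _ _).trans (add_le_add_left (measure_union_le _ _) _)

lemma interNum_le_of_near_leaf {C : ℝ}
    (hC : ∀ z w : ℍ, dist z w ≤ 1 → interNum L z w ≤ ENNReal.ofReal C)
    {p q : OnePoint ℝ} (hpq : (p, q) ∈ mSupport L.μ) {z₁ z₂ u₁ u₂ : ℍ}
    (hu₁ : u₁ ∈ geodesic p q) (hu₂ : u₂ ∈ geodesic p q)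
    (h₁ : dist z₁ u₁ ≤ 1) (h₂ : dist u₂ z₂ ≤ 1) :
    interNum L z₁ z₂ ≤ 4 * ENNReal.ofReal C := by
  calc interNum L z₁ z₂
      ≤ interNum L z₁ u₁ + (interNum L u₁ u₂ + interNum L u₂ z₂ +
          L.μ {ab | u₂ ∈ geodesic ab.1 ab.2}) + L.μ {ab | u₁ ∈ geodesic ab.1 ab.2} :=
        (L.interNum_le_add z₁ u₁ z₂).trans
          (add_le_add_left (add_le_add_right (L.interNum_le_add u₁ u₂ z₂) _) _)
    _ ≤ ENNReal.ofReal C + (0 + ENNReal.ofReal C + ENNReal.ofReal C) + ENNReal.ofReal C := by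
        gcongr
        exacts [hC _ _ h₁, (L.interNum_eq_zero_of_mem_leaf hpq hu₁ hu₂).le, hC _ _ h₂,
          L.measure_leaves_through_le hC hpq hu₂, L.measure_leaves_through_le hC hpq hu₁]
    _ = 4 * ENNReal.ofReal C := by ring

end MeasuredLamination

theorem strongly_fill_leaves_not_parallel_general
    (lamM lamP : MeasuredLamination) (hM : lamM.Bounded)
    (hfill : StronglyFill lamM lamP) :
    ∃ ε L : ℝ, 0 < ε ∧ 0 < L ∧
      ∀ p q : OnePoint ℝ, (p, q) ∈ mSupport lamP.μ →
      ∀ z₁ z₂ : UpperHalfPlane, z₁ ∈ geodesic p q → z₂ ∈ geodesic p q →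
        L ≤ dist z₁ z₂ →
      ∀ p' q' : OnePoint ℝ, (p', q') ∈ mSupport lamM.μ →
      ∀ w₁ w₂ : UpperHalfPlane, w₁ ∈ geodesic p' q' → w₂ ∈ geodesic p' q' →
        L ≤ dist w₁ w₂ →
        ε ≤ max
          (Metric.infDist z₁ {w ∈ geodesic p' q' | dist w₁ w + dist w w₂ = dist w₁ w₂})
          (Metric.infDist z₂ {w ∈ geodesic p' q' | dist w₁ w + dist w w₂ = dist w₁ w₂}) := by
  obtain ⟨C, hC, hCb⟩ := hM
  obtain ⟨c, hc, hcfill⟩ := hfill (4 * C + 1) (by linarith)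
  refine ⟨1, c, one_pos, hc, fun p q hpq z₁ z₂ hz₁ hz₂ hzc p' q' hpq' w₁ w₂ hw₁ _ _ => ?_⟩
  by_contra! hnear
  obtain ⟨hnear₁, hnear₂⟩ := max_lt_iff.1 hnear
  have hγ : {w ∈ geodesic p' q' | dist w₁ w + dist w w₂ = dist w₁ w₂}.Nonempty :=
    ⟨w₁, hw₁, by simp⟩
  obtain ⟨u₁, hu₁, hzu₁⟩ := (Metric.infDist_lt_iff hγ).1 hnear₁
  obtain ⟨u₂, hu₂, hzu₂⟩ := (Metric.infDist_lt_iff hγ).1 hnear₂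
  have hM4 := lamM.interNum_le_of_near_leaf hCb hpq' hu₁.1 hu₂.1 hzu₁.le
    (dist_comm z₂ u₂ ▸ hzu₂.le)
  have hfill' := hcfill z₁ z₂ hzc
  rw [lamP.interNum_eq_zero_of_mem_leaf hpq hz₁ hz₂, add_zero] at hfill'
  have : ENNReal.ofReal (4 * C + 1) ≤ ENNReal.ofReal (4 * C) := by
    rw [ENNReal.ofReal_mul (by norm_num)]
    simpa using hfill'.trans hM4
  linarith [(ENNReal.ofReal_le_ofReal_iff (by linarith)).1 this]

/-- If `λ₋, λ₊` are bounded measured geodesic laminations on ℍ²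
that strongly fill, there are `ε > 0` and `L > 0` such that for any leaf `g(p,q)`
of `λ₊` and points `z₁, z₂` on it at distance at least `L`, and any leaf `g(p′,q′)`
of `λ₋` and points `w₁, w₂` on it at distance at least `L`, one of `z₁, z₂` is at
distance at least `ε` from the geodesic segment of `g(p′,q′)` between `w₁` and `w₂`. -/
theorem strongly_fill_leaves_not_parallel
    (lamM lamP : MeasuredLamination) (hM : lamM.Bounded) (hP : lamP.Bounded)
    (hfill : StronglyFill lamM lamP) :
    ∃ ε L : ℝ, 0 < ε ∧ 0 < L ∧
      ∀ p q : OnePoint ℝ, (p, q) ∈ mSupport lamP.μ →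
      ∀ z₁ z₂ : UpperHalfPlane, z₁ ∈ geodesic p q → z₂ ∈ geodesic p q →
        L ≤ dist z₁ z₂ →
      ∀ p' q' : OnePoint ℝ, (p', q') ∈ mSupport lamM.μ →
      ∀ w₁ w₂ : UpperHalfPlane, w₁ ∈ geodesic p' q' → w₂ ∈ geodesic p' q' →
        L ≤ dist w₁ w₂ →
        ε ≤ max
          (Metric.infDist z₁ {w ∈ geodesic p' q' | dist w₁ w + dist w w₂ = dist w₁ w₂})
          (Metric.infDist z₂ {w ∈ geodesic p' q' | dist w₁ w + dist w w₂ = dist w₁ w₂}) :=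
  strongly_fill_leaves_not_parallel_general lamM lamP hM hfill

end
end

section
/- Let K > 1 and let u : ℝP¹ → ℝP¹ be an increasing map (weakly preserving the standard cyclic order) with u(−1) = −1, u(0) = 0 and u(∞) = ∞. Assume that for every 4-tuple (a,b,c,d) of pairwise distinct points in symmetric position, the images u(a), u(b), u(c), u(d) are pairwise distinct and cr(u(a),u(b),u(c),u(d)) ∈ [−K, −1/K]. Then u is a homeomorphism of ℝP¹. -/
/- ℝP¹ = ℝ ∪ {∞} (one-point compactification), cross-ratio, cyclic order,
   discrete quasi-symmetric maps. -/

noncomputable section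
open Set

/-- The real value of a point of `ℝP¹ = ℝ ∪ {∞}` (junk value `0` at `∞`). -/
def rv (x : OnePoint ℝ) : ℝ := Option.getD x 0

open Classical in
/-- Cross-ratio `cr(a,b,c,d) = ((a−b)(c−d))/((a−d)(c−b))` on `ℝP¹ = ℝ ∪ {∞}`,
extended by the usual limiting conventions when one point is `∞`; in particular
`cr(−1,0,1,∞) = −1`. -/
def crossRatio (a b c d : OnePoint ℝ) : ℝ :=
  if a = OnePoint.infty then (rv c - rv d) / (rv c - rv b)
  else if b = OnePoint.infty then (rv c - rv d) / (rv a - rv d)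
  else if c = OnePoint.infty then (rv a - rv b) / (rv a - rv d)
  else if d = OnePoint.infty then (rv a - rv b) / (rv c - rv b)
  else ((rv a - rv b) * (rv c - rv d)) / ((rv a - rv d) * (rv c - rv b))

/-- `a, b, c, d` are pairwise distinct. -/
def Distinct4 (a b c d : OnePoint ℝ) : Prop :=
  a ≠ b ∧ a ≠ c ∧ a ≠ d ∧ b ≠ c ∧ b ≠ d ∧ c ≠ d

/-- The closed arc of `ℝP¹ = ℝ ∪ {∞}` from `x` to `y` in the counterclockwise
(increasing) direction, wrapping through `∞`. -/
def arcCcw (x y : OnePoint ℝ) : Set (OnePoint ℝ) :=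
  {z | ∃ a b c : ℝ, x = (a : OnePoint ℝ) ∧ y = (b : OnePoint ℝ) ∧ z = (c : OnePoint ℝ) ∧
        ((a ≤ b ∧ a ≤ c ∧ c ≤ b) ∨ (b < a ∧ (a ≤ c ∨ c ≤ b)))} ∪
  {z | z = OnePoint.infty ∧
        (x = OnePoint.infty ∨ y = OnePoint.infty ∨
         ∃ a b : ℝ, x = (a : OnePoint ℝ) ∧ y = (b : OnePoint ℝ) ∧ b < a)} ∪
  {z | ∃ a c : ℝ, x = (a : OnePoint ℝ) ∧ y = OnePoint.infty ∧ z = (c : OnePoint ℝ) ∧ a ≤ c} ∪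
  {z | ∃ b c : ℝ, x = OnePoint.infty ∧ y = (b : OnePoint ℝ) ∧ z = (c : OnePoint ℝ) ∧ c ≤ b}

/-- The standard cyclic betweenness on `ℝP¹`: `b` lies on the closed
counterclockwise arc from `a` to `c`. -/
def CBtw (a b c : OnePoint ℝ) : Prop := b ∈ arcCcw a c

/-- `f` weakly preserves the standard cyclic order on the subset `F` of `ℝP¹`
(an "increasing" map). -/
def IncreasingOn (F : Set (OnePoint ℝ)) (f : OnePoint ℝ → OnePoint ℝ) : Prop :=
  ∀ a ∈ F, ∀ b ∈ F, ∀ c ∈ F, CBtw a b c → CBtw (f a) (f b) (f c)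

/-- `f` weakly preserves the standard cyclic order of `ℝP¹`. -/
def CyclicMono (f : OnePoint ℝ → OnePoint ℝ) : Prop :=
  ∀ a b c : OnePoint ℝ, CBtw a b c → CBtw (f a) (f b) (f c)

/-- `v` is `(K,ε)`-quasi-symmetric on the (finite) set `F`: it is increasing on `F`
and sends 4-tuples of points of `F` in `ε`-symmetric position
(`cr ∈ [−1−ε, −1+ε]`) to 4-tuples with cross-ratio in `[−K, −1/K]`. -/
def IsQSOn (K ε : ℝ) (F : Set (OnePoint ℝ)) (v : OnePoint ℝ → OnePoint ℝ) : Prop :=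
  IncreasingOn F v ∧
  ∀ a ∈ F, ∀ b ∈ F, ∀ c ∈ F, ∀ d ∈ F, Distinct4 a b c d →
    crossRatio a b c d ∈ Set.Icc (-1 - ε) (-1 + ε) →
    crossRatio (v a) (v b) (v c) (v d) ∈ Set.Icc (-K) (-1 / K)

/-! On `ℝ` the map is an increasing function `f`, and the symmetric 4-tuples `(x - t, ∞, x + t, x)`
turn the hypothesis into the Beurling–Ahlfors condition
`(f (x + t) - f x) / (f x - f (x - t)) ∈ [1/K, K]`; distinctness of the images makes `f` strictly
increasing. A jump of `f` at `x` is a lower bound for `f (x + s) - f (x - s)` as `s → 0⁺`, whereas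
the image `f (x - s) - f (x - 3 s)` of the adjacent interval tends to `0`, so `f` is continuous.
Likewise, were `f` bounded above, `f (3 t) - f t` would tend to `0` while `f t - f (-t)` stays
bounded below. So `f` is an increasing homeomorphism of `ℝ`, and `u` is its extension to the
one-point compactification. -/

open Filter Topology Function OnePoint

theorem tendsto_sub_mul_nhdsGT_zero (x : ℝ) {c : ℝ} (hc : 0 < c) :
    Tendsto (fun s => x - c * s) (𝓝[>] 0) (𝓝[<] x) := by
  refine tendsto_nhdsWithin_iff.2 ⟨?_, ?_⟩
  · have : Continuous fun s : ℝ => x - c * s := by fun_prop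
    simpa using (this.tendsto 0).mono_left nhdsWithin_le_nhds
  · filter_upwards [self_mem_nhdsWithin] with s (hs : 0 < s)
    simpa using mul_pos hc hs

/-- The Beurling–Ahlfors `K`-quasisymmetry condition. -/
def IsQuasisymmetric (K : ℝ) (f : ℝ → ℝ) : Prop :=
  ∀ x t : ℝ, 0 < t →
    f (x + t) - f x ≤ K * (f x - f (x - t)) ∧ f x - f (x - t) ≤ K * (f (x + t) - f x)

namespace IsQuasisymmetric

variable {K : ℝ} {f : ℝ → ℝ}

theorem neg_comp_neg (hf : IsQuasisymmetric K f) : IsQuasisymmetric K fun x => -f (-x) := by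
  intro x t ht
  obtain ⟨h₁, h₂⟩ := hf (-x) t ht
  simp only [neg_add', neg_sub', sub_neg_eq_add]
  constructor <;> linarith

theorem continuous (hf : IsQuasisymmetric K f) (hmono : Monotone f) : Continuous f := by
  refine continuous_iff_continuousAt.2 fun x => ?_
  rw [hmono.continuousAt_iff_leftLim_eq_rightLim]
  refine le_antisymm (hmono.leftLim_le_rightLim le_rfl) ?_
  have hlim : Tendsto (fun s => K * (f (x - 1 * s) - f (x - 3 * s))) (𝓝[>] 0)
      (𝓝 (K * (leftLim f x - leftLim f x))) :=
    (((hmono.tendsto_leftLim x).comp (tendsto_sub_mul_nhdsGT_zero x one_pos)).sub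
      ((hmono.tendsto_leftLim x).comp (tendsto_sub_mul_nhdsGT_zero x three_pos))).const_mul K
  rw [sub_self, mul_zero] at hlim
  refine sub_nonpos.1 (ge_of_tendsto hlim ?_)
  filter_upwards [self_mem_nhdsWithin] with s (hs : 0 < s)
  have hjump : rightLim f x - leftLim f x ≤ f (x + s) - f (x - s) :=
    sub_le_sub (hmono.rightLim_le (by linarith)) (hmono.le_leftLim (by linarith))
  have hqs := (hf (x - s) (2 * s) (by linarith)).1
  rw [show x - s + 2 * s = x + s by ring, show x - s - 2 * s = x - 3 * s by ring] at hqs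
  rw [one_mul]
  exact hjump.trans hqs

theorem tendsto_atTop (hf : IsQuasisymmetric K f) (hmono : StrictMono f) :
    Tendsto f atTop atTop := by
  refine (tendsto_atTop_atTop_iff_of_monotone hmono.monotone).2 ?_
  by_contra! hbdd
  obtain ⟨b, hb⟩ := hbdd
  have hsup := tendsto_atTop_ciSup hmono.monotone ⟨b, Set.forall_mem_range.2 fun a => (hb a).le⟩
  have hlim : Tendsto (fun t => K * (f (3 * t) - f t)) atTop
      (𝓝 (K * ((⨆ x, f x) - ⨆ x, f x))) :=
    ((hsup.comp (tendsto_id.const_mul_atTop three_pos)).sub hsup).const_mul K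
  rw [sub_self, mul_zero] at hlim
  refine (ge_of_tendsto hlim ?_).not_gt (sub_pos.2 (hmono (neg_one_lt_zero.trans one_pos)))
  filter_upwards [eventually_ge_atTop 1] with t ht
  have hqs := (hf t (2 * t) (by linarith)).2
  rw [show t + 2 * t = 3 * t by ring, show t - 2 * t = -t by ring] at hqs
  exact (sub_le_sub (hmono.monotone ht) (hmono.monotone (by linarith))).trans hqs

theorem tendsto_atBot (hf : IsQuasisymmetric K f) (hmono : StrictMono f) :
    Tendsto f atBot atBot := by
  have hneg :=
    hf.neg_comp_neg.tendsto_atTop fun x y hxy => neg_lt_neg (hmono (neg_lt_neg hxy))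
  simpa [Function.comp_def] using
    tendsto_neg_atTop_atBot.comp (hneg.comp tendsto_neg_atBot_atTop)

theorem surjective (hf : IsQuasisymmetric K f) (hmono : StrictMono f) : Surjective f :=
  (hf.continuous hmono.monotone).surjective (hf.tendsto_atTop hmono) (hf.tendsto_atBot hmono)

end IsQuasisymmetric

theorem OnePoint.isHomeomorph_of_homeomorph_of_apply_coe {X : Type*} [TopologicalSpace X]
    {u : OnePoint X → OnePoint X} (e : X ≃ₜ X) (hinf : u ∞ = ∞) (hcoe : ∀ x : X, u x = e x) :
    IsHomeomorph u := by
  refine isHomeomorph_iff_exists_homeomorph.2 ⟨e.onePointCongr, funext fun z => ?_⟩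
  induction z using OnePoint.rec with
  | infty => exact hinf.symm
  | coe x => exact (hcoe x).symm

@[simp]
theorem rv_coe (x : ℝ) : rv x = x := rfl

theorem coe_rv_of_ne_infty {z : OnePoint ℝ} (hz : z ≠ ∞) : ((rv z : ℝ) : OnePoint ℝ) = z := by
  obtain ⟨x, rfl⟩ := ne_infty_iff_exists.1 hz
  rfl

theorem crossRatio_coe_infty_coe_coe (a c d : ℝ) :
    crossRatio a ∞ c d = (c - d) / (a - d) := by
  simp [crossRatio]

theorem cbtw_coe_coe_infty_iff (a b : ℝ) : CBtw a b ∞ ↔ a ≤ b := by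
  simp [CBtw, arcCcw]

theorem distinct4_sub_infty_add_self (x : ℝ) {t : ℝ} (ht : t ≠ 0) :
    Distinct4 ↑(x - t) ∞ ↑(x + t) x := by
  have : x - t ≠ x + t := fun h => ht (by linarith)
  simp [Distinct4, ht, this]

theorem crossRatio_sub_infty_add_self (x : ℝ) {t : ℝ} (ht : t ≠ 0) :
    crossRatio ↑(x - t) ∞ ↑(x + t) x = -1 := by
  rw [crossRatio_coe_infty_coe_coe, add_sub_cancel_left, sub_sub_cancel_left, div_neg,
    div_self ht]

def IsQSOnSymmetric (K : ℝ) (u : OnePoint ℝ → OnePoint ℝ) : Prop :=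
  ∀ a b c d : OnePoint ℝ, Distinct4 a b c d → crossRatio a b c d = -1 →
    Distinct4 (u a) (u b) (u c) (u d) ∧
    crossRatio (u a) (u b) (u c) (u d) ∈ Set.Icc (-K) (-1 / K)

namespace IsQSOnSymmetric

variable {K : ℝ} {u : OnePoint ℝ → OnePoint ℝ}

theorem distinct4_apply (h : IsQSOnSymmetric K u) (x : ℝ) {t : ℝ} (ht : t ≠ 0) :
    Distinct4 (u ↑(x - t)) (u ∞) (u ↑(x + t)) (u x) :=
  (h _ _ _ _ (distinct4_sub_infty_add_self x ht) (crossRatio_sub_infty_add_self x ht)).1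

theorem apply_coe_ne_infty (h : IsQSOnSymmetric K u) (hinf : u ∞ = ∞) (x : ℝ) : u x ≠ ∞ :=
  hinf ▸ (h.distinct4_apply x one_ne_zero).2.2.2.2.1.symm

theorem coe_rv_apply (h : IsQSOnSymmetric K u) (hinf : u ∞ = ∞) (x : ℝ) :
    ((rv (u x) : ℝ) : OnePoint ℝ) = u x :=
  coe_rv_of_ne_infty (h.apply_coe_ne_infty hinf x)

theorem strictMono_rv_apply (h : IsQSOnSymmetric K u) (hinf : u ∞ = ∞) (hmono : CyclicMono u) :
    StrictMono fun x : ℝ => rv (u x) := by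
  refine Monotone.strictMono_of_injective (fun a b hab => ?_) fun a b hab => ?_
  · have hbtw := hmono a b ∞ ((cbtw_coe_coe_infty_iff a b).2 hab)
    rwa [← h.coe_rv_apply hinf a, ← h.coe_rv_apply hinf b, hinf, cbtw_coe_coe_infty_iff] at hbtw
  · by_contra hne
    have hab' : u ↑(b - (b - a)) ≠ u b :=
      (h.distinct4_apply b (sub_ne_zero.2 (Ne.symm hne))).2.2.1
    rw [sub_sub_cancel, ← h.coe_rv_apply hinf a, ← h.coe_rv_apply hinf b] at hab'
    exact hab' (congrArg _ hab)

theorem isQuasisymmetric_rv_apply (h : IsQSOnSymmetric K u) (hinf : u ∞ = ∞)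
    (hmono : StrictMono fun x : ℝ => rv (u x)) (hK : 0 < K) :
    IsQuasisymmetric K fun x : ℝ => rv (u x) := by
  intro x t ht
  have hcr := (h _ _ _ _ (distinct4_sub_infty_add_self x ht.ne')
    (crossRatio_sub_infty_add_self x ht.ne')).2
  rw [← h.coe_rv_apply hinf (x - t), ← h.coe_rv_apply hinf (x + t), ← h.coe_rv_apply hinf x,
    hinf, crossRatio_coe_infty_coe_coe] at hcr
  have hneg : rv (u ↑(x - t)) - rv (u x) < 0 := sub_neg.2 (hmono (by linarith))
  rw [Set.mem_Icc, le_div_iff_of_neg hneg, div_le_iff_of_neg hneg] at hcr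
  have hcancel : K * (-1 / K * (rv (u ↑(x - t)) - rv (u x))) = -(rv (u ↑(x - t)) - rv (u x)) := by
    field_simp
  constructor
  · linarith [hcr.1]
  · linarith [mul_le_mul_of_nonneg_left hcr.2 hK.le]

end IsQSOnSymmetric

theorem increasing_qs_is_homeomorphism_general
    (K : ℝ) (hK : 1 < K) (u : OnePoint ℝ → OnePoint ℝ) (hmono : CyclicMono u)
    (hfix₃ : u OnePoint.infty = OnePoint.infty)
    (hcr : ∀ a b c d : OnePoint ℝ, Distinct4 a b c d → crossRatio a b c d = -1 →
      Distinct4 (u a) (u b) (u c) (u d) ∧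
      crossRatio (u a) (u b) (u c) (u d) ∈ Set.Icc (-K) (-1 / K)) :
    IsHomeomorph u := by
  have hqs : IsQSOnSymmetric K u := hcr
  have hf := hqs.strictMono_rv_apply hfix₃ hmono
  have hsurj := (hqs.isQuasisymmetric_rv_apply hfix₃ hf (zero_lt_one.trans hK)).surjective hf
  exact OnePoint.isHomeomorph_of_homeomorph_of_apply_coe
    (hf.orderIsoOfSurjective _ hsurj).toHomeomorph hfix₃ fun x => (hqs.coe_rv_apply hfix₃ x).symm

/-- An increasing map `u : ℝP¹ → ℝP¹` fixing `−1, 0, ∞` that sends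
every symmetric 4-tuple to a 4-tuple of pairwise distinct points with cross-ratio in
`[−K, −1/K]` is a homeomorphism of `ℝP¹`. -/
theorem increasing_qs_is_homeomorphism
    (K : ℝ) (hK : 1 < K) (u : OnePoint ℝ → OnePoint ℝ) (hmono : CyclicMono u)
    (hfix₁ : u ((-1 : ℝ) : OnePoint ℝ) = ((-1 : ℝ) : OnePoint ℝ))
    (hfix₂ : u ((0 : ℝ) : OnePoint ℝ) = ((0 : ℝ) : OnePoint ℝ))
    (hfix₃ : u OnePoint.infty = OnePoint.infty)
    (hcr : ∀ a b c d : OnePoint ℝ, Distinct4 a b c d → crossRatio a b c d = -1 →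
      Distinct4 (u a) (u b) (u c) (u d) ∧
      crossRatio (u a) (u b) (u c) (u d) ∈ Set.Icc (-K) (-1 / K)) :
    IsHomeomorph u :=
  increasing_qs_is_homeomorphism_general K hK u hmono hfix₃ hcr

end
end
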